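/- arXiv:2512.24333 — 5 statements merged into one kernel-verified Lean document; each statement's English description precedes it below -/
import Mathlib

section
/- Let (𝔤, B) be a quadratic Lie algebra containing the Heisenberg Lie algebra 𝔥_m = V ⊕ Fℏ as an ideal. Then ℏ lies in the center of 𝔤, i.e. [ℏ, x] = 0 for all x ∈ 𝔤. -/
/-! For every `x`, Jacobi shows that `⁅x, ℏ⁆` commutes with the ideal `𝔥_m`; since the centre
of `𝔥_m` is `Fℏ` (nondegeneracy of `ω`), `⁅x, ℏ⁆ = λ(x) ℏ`. If `λ(x) ≠ 0`, invariance of `B`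
gives first `B(x, ℏ) = 0` and then `λ(x) B(ℏ, y) = -λ(y) B(x, ℏ) = 0` for all `y`, so `ℏ = 0`. -/

theorem lie_lie_eq_zero_of_forall_lie_eq_zero {L : Type*} [LieRing L] (I : Set L) {h : L}
    (hcent : ∀ y ∈ I, ⁅y, h⁆ = 0) (hideal : ∀ x : L, ∀ y ∈ I, ⁅x, y⁆ ∈ I)
    (x : L) {y : L} (hy : y ∈ I) : ⁅⁅x, h⁆, y⁆ = 0 := by
  rw [lie_lie, ← lie_skew h y, hcent y hy, ← lie_skew h, hcent _ (hideal x y hy)]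
  simp

theorem lie_eq_zero_of_forall_lie_mem_span {F L : Type*} [Field F] [LieRing L] [LieAlgebra F L]
    (B : LinearMap.BilinForm F L) (hB : B.SeparatingLeft)
    (hinv : ∀ x y z : L, B ⁅x, y⁆ z = B x ⁅y, z⁆) {h : L}
    (hspan : ∀ x : L, ⁅x, h⁆ ∈ F ∙ h) (x : L) : ⁅x, h⁆ = 0 := by
  obtain ⟨c, hc⟩ := Submodule.mem_span_singleton.mp (hspan x)
  rcases eq_or_ne c 0 with rfl | hc0
  · rw [← hc, zero_smul]
  have hxh : B x h = 0 := by
    have := hinv x x h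
    rw [lie_self, map_zero, LinearMap.zero_apply, ← hc, map_smul, smul_eq_mul] at this
    exact (mul_eq_zero.mp this.symm).resolve_left hc0
  have hh : h = 0 := hB h fun y => by
    obtain ⟨d, hd⟩ := Submodule.mem_span_singleton.mp (hspan y)
    have := hinv x h y
    rw [← hc, ← lie_skew, ← hd, map_smul, LinearMap.smul_apply, map_neg, map_smul, hxh,
      smul_zero, neg_zero, smul_eq_mul] at this
    exact (mul_eq_zero.mp this).resolve_left hc0
  rw [hh, lie_zero]

section Heisenberg

variable {F g : Type*} [Field F] [LieRing g] [LieAlgebra F g]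
  {V : Submodule F g} {hbar : g} {ω : V →ₗ[F] V →ₗ[F] F}

theorem heisenberg_eq_zero_of_forall_lie_eq_zero (hbar_ne : hbar ≠ 0)
    (hω_nondeg : ∀ u : V, (∀ v : V, ω u v = 0) → u = 0)
    (hbrV : ∀ u v : V, ⁅(u : g), (v : g)⁆ = ω u v • hbar)
    (v : V) (hv : ∀ u : V, ⁅(v : g), (u : g)⁆ = 0) : v = 0 :=
  hω_nondeg v fun u => (smul_eq_zero.mp ((hbrV v u).symm.trans (hv u))).resolve_right hbar_ne

theorem heisenberg_lie_hbar_mem_span (hbar_ne : hbar ≠ 0)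
    (hω_nondeg : ∀ u : V, (∀ v : V, ω u v = 0) → u = 0)
    (hbrV : ∀ u v : V, ⁅(u : g), (v : g)⁆ = ω u v • hbar)
    (hcent : ∀ x ∈ V ⊔ F ∙ hbar, ⁅x, hbar⁆ = 0)
    (hideal : ∀ x : g, ∀ y ∈ V ⊔ F ∙ hbar, ⁅x, y⁆ ∈ V ⊔ F ∙ hbar) (x : g) :
    ⁅x, hbar⁆ ∈ F ∙ hbar := by
  have hbar_mem : hbar ∈ V ⊔ F ∙ hbar :=
    Submodule.mem_sup_right (Submodule.mem_span_singleton_self hbar)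
  obtain ⟨v, hv, z, hz, hvz⟩ := Submodule.mem_sup.mp (hideal x hbar hbar_mem)
  obtain ⟨c, rfl⟩ := Submodule.mem_span_singleton.mp hz
  have hv0 : (⟨v, hv⟩ : V) = 0 := by
    refine heisenberg_eq_zero_of_forall_lie_eq_zero hbar_ne hω_nondeg hbrV _ fun u => ?_
    have hxu := lie_lie_eq_zero_of_forall_lie_eq_zero _ hcent hideal x
      (Submodule.mem_sup_left u.2)
    rwa [← hvz, add_lie, smul_lie, ← lie_skew hbar, hcent u (Submodule.mem_sup_left u.2),
      neg_zero, smul_zero, add_zero] at hxu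
  rw [← hvz, show v = 0 from congrArg Subtype.val hv0, zero_add]
  exact Submodule.smul_mem _ c (Submodule.mem_span_singleton_self hbar)

end Heisenberg

theorem hbar_central_of_heisenberg_ideal_general
    {F g : Type*} [Field F] [LieRing g] [LieAlgebra F g]
    (V : Submodule F g) (hbar : g) (ω : V →ₗ[F] V →ₗ[F] F)
    (hbar_ne : hbar ≠ 0)
    (hω_nondeg : ∀ u : V, (∀ v : V, ω u v = 0) → u = 0)
    (hbrV : ∀ u v : V, ⁅(u : g), (v : g)⁆ = ω u v • hbar)
    (hcent : ∀ x ∈ V ⊔ Submodule.span F {hbar}, ⁅x, hbar⁆ = 0)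
    (hideal : ∀ x : g, ∀ y ∈ V ⊔ Submodule.span F {hbar},
        ⁅x, y⁆ ∈ V ⊔ Submodule.span F {hbar})
    (B : LinearMap.BilinForm F g)
    (hnondeg : B.Nondegenerate)
    (hinv : ∀ x y z : g, B ⁅x, y⁆ z = B x ⁅y, z⁆) :
    ∀ x : g, ⁅hbar, x⁆ = 0 := by
  intro x
  rw [← lie_skew, lie_eq_zero_of_forall_lie_mem_span B hnondeg.1 hinv
    (heisenberg_lie_hbar_mem_span hbar_ne hω_nondeg hbrV hcent hideal) x, neg_zero]

/-- If a quadratic Lie algebra `𝔤` contains the Heisenberg Lie algebra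
`𝔥_m = V ⊕ Fℏ` as an ideal, then `ℏ` is central in `𝔤`. -/
theorem hbar_central_of_heisenberg_ideal
    {F g : Type*} [Field F] [LieRing g] [LieAlgebra F g]
    (V : Submodule F g) (hbar : g) (ω : V →ₗ[F] V →ₗ[F] F)
    (hbar_ne : hbar ≠ 0)
    (hbar_notin : hbar ∉ V)
    (hskew : ∀ u v : V, ω u v = - ω v u)
    (hω_nondeg : ∀ u : V, (∀ v : V, ω u v = 0) → u = 0)
    (hbrV : ∀ u v : V, ⁅(u : g), (v : g)⁆ = ω u v • hbar)
    (hcent : ∀ x ∈ V ⊔ Submodule.span F {hbar}, ⁅x, hbar⁆ = 0)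
    (hideal : ∀ x : g, ∀ y ∈ V ⊔ Submodule.span F {hbar},
        ⁅x, y⁆ ∈ V ⊔ Submodule.span F {hbar})
    (B : LinearMap.BilinForm F g)
    (hsymm : ∀ x y : g, B x y = B y x)
    (hnondeg : B.Nondegenerate)
    (hinv : ∀ x y z : g, B ⁅x, y⁆ z = B x ⁅y, z⁆) :
    ∀ x : g, ⁅hbar, x⁆ = 0 :=
  hbar_central_of_heisenberg_ideal_general V hbar ω hbar_ne hω_nondeg hbrV hcent hideal B hnondeg
    hinv
end

section
/- Let (S, [·,·]_S, B_S) be a quadratic Lie algebra over F and D: S → S a derivation that is skew-symmetric with respect to B_S. On the vector space g = FD ⊕ S ⊕ Fℏ define [D,x] = D(x), [x,y] = [x,y]_S + B_S(D(x),y)ℏ for x,y ∈ S, and [ℏ, g] = 0. Then this bracket satisfies the Jacobi identity, so g is a Lie algebra (the double extension S(D)). -/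
/-- The bracket of the double extension `S(D) = FD ⊕ S ⊕ Fℏ`:
`[(α,x,γ),(β,y,δ)] = (0, α·D(y) − β·D(x) + [x,y]_S, B_S(D(x),y))`. -/
def deBracket {F S : Type*} [Field F] [LieRing S] [LieAlgebra F S]
    (D : S →ₗ[F] S) (BS : LinearMap.BilinForm F S) :
    F × S × F → F × S × F → F × S × F :=
  fun x y => (0, x.1 • D y.2.1 - y.1 • D x.2.1 + ⁅x.2.1, y.2.1⁆, BS (D x.2.1) y.2.1)

/-- If `(S,B_S)` is a quadratic Lie algebra and `D` a `B_S`-skew-symmetric derivation,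
then the double-extension bracket on `FD ⊕ S ⊕ Fℏ` is antisymmetric and satisfies
the Jacobi identity, so `S(D)` is a Lie algebra. -/
theorem double_extension_is_lie_algebra
    {F S : Type*} [Field F] [LieRing S] [LieAlgebra F S]
    (BS : LinearMap.BilinForm F S)
    (hsymm : ∀ x y : S, BS x y = BS y x)
    (hnondeg : BS.Nondegenerate)
    (hinv : ∀ x y z : S, BS ⁅x, y⁆ z = BS x ⁅y, z⁆)
    (D : S →ₗ[F] S)
    (hder : ∀ x y : S, D ⁅x, y⁆ = ⁅D x, y⁆ + ⁅x, D y⁆)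
    (hDskew : ∀ x y : S, BS (D x) y = - BS x (D y)) :
    (∀ x y : F × S × F, deBracket D BS x y = - deBracket D BS y x) ∧
    (∀ x y z : F × S × F,
        deBracket D BS (deBracket D BS x y) z +
        deBracket D BS (deBracket D BS y z) x +
        deBracket D BS (deBracket D BS z x) y = 0) := by
  constructor
  · intro x y
    refine Prod.ext (by simp [deBracket]) (Prod.ext ?_ ?_)
    · show x.1 • D y.2.1 - y.1 • D x.2.1 + ⁅x.2.1, y.2.1⁆ =
        -(y.1 • D x.2.1 - x.1 • D y.2.1 + ⁅y.2.1, x.2.1⁆)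
      rw [← lie_skew y.2.1 x.2.1]; abel
    · show BS (D x.2.1) y.2.1 = -(BS (D y.2.1) x.2.1)
      rw [hDskew, hsymm]
  · intro X Y Z
    obtain ⟨a, x, p⟩ := X
    obtain ⟨b, y, q⟩ := Y
    obtain ⟨c, z, r⟩ := Z
    have L1 : ∀ u v : S, BS (D (D u)) v = BS (D (D v)) u := by
      intro u v
      rw [hDskew, hDskew, hsymm, hDskew, hDskew]
      ring
    have L3 : ∀ u v w : S, BS (D u) ⁅v, w⁆ + BS (D v) ⁅w, u⁆ + BS (D w) ⁅u, v⁆ = 0 := by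
      intro u v w
      have h1 : BS (D u) ⁅v, w⁆ = - BS u (D ⁅v, w⁆) := hDskew _ _
      rw [hder, map_add] at h1
      have h2 : BS u ⁅D v, w⁆ = BS (D v) ⁅w, u⁆ := by
        rw [hsymm, hinv]
      have h3 : BS u ⁅v, D w⁆ = BS (D w) ⁅u, v⁆ := by
        rw [← hinv, hsymm]
      rw [h1, h2, h3]; ring
    have L2 : ∀ u v w : S, BS (D ⁅u, v⁆) w = BS (D u) ⁅v, w⁆ + BS (D v) ⁅w, u⁆ := by
      intro u v w
      rw [hder, map_add, LinearMap.add_apply, hinv (D u) v w,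
        hsymm ⁅u, D v⁆ w, ← hinv w u (D v), hsymm ⁅w, u⁆ (D v), hsymm (D v) ⁅w, u⁆]
    have jac0 : ⁅⁅x, y⁆, z⁆ + ⁅⁅y, z⁆, x⁆ + ⁅⁅z, x⁆, y⁆ = 0 := by
      have h := neg_eq_zero.mpr (lie_jacobi x y z)
      rw [neg_add, neg_add] at h
      rw [← lie_skew ⁅x, y⁆ z, ← lie_skew ⁅y, z⁆ x, ← lie_skew ⁅z, x⁆ y, add_rotate]
      exact h
    have jA : ⁅⁅x, y⁆, z⁆ = -(⁅⁅y, z⁆, x⁆ + ⁅⁅z, x⁆, y⁆) := by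
      rw [eq_neg_iff_add_eq_zero, ← add_assoc]; exact jac0
    refine Prod.ext (by simp [deBracket]) (Prod.ext ?_ ?_)
    · show (0 : F) • D z - c • D (a • D y - b • D x + ⁅x, y⁆) + ⁅a • D y - b • D x + ⁅x, y⁆, z⁆
        + ((0 : F) • D x - a • D (b • D z - c • D y + ⁅y, z⁆) + ⁅b • D z - c • D y + ⁅y, z⁆, x⁆)
        + ((0 : F) • D y - b • D (c • D x - a • D z + ⁅z, x⁆) + ⁅c • D x - a • D z + ⁅z, x⁆, y⁆) = 0
      simp only [zero_smul, zero_sub, map_add, map_sub, map_smul, hder,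
        add_lie, sub_lie, smul_lie, jA]
      rw [← lie_skew x (D y), ← lie_skew y (D z), ← lie_skew z (D x)]
      module
    · show BS (D (a • D y - b • D x + ⁅x, y⁆)) z
        + BS (D (b • D z - c • D y + ⁅y, z⁆)) x
        + BS (D (c • D x - a • D z + ⁅z, x⁆)) y = 0
      simp only [map_add, map_sub, map_smul, LinearMap.add_apply, LinearMap.sub_apply,
        LinearMap.smul_apply, smul_eq_mul]
      linear_combination b * L1 z x + c * L1 x y - a * L1 z y
        + L2 x y z + L2 y z x + L2 z x y + 2 * L3 x y z
end

section
/- Let (S, [·,·]_S, B_S) be a quadratic Lie algebra and D a B_S-skew-symmetric derivation of S. On the double extension S(D) = FD ⊕ S ⊕ Fℏ define the bilinear form B by B|_{S×S} = B_S, B(D,ℏ) = 1, B(S,D) = B(S,ℏ) = 0, B(D,D) = B(ℏ,ℏ) = 0. Then B is a nondegenerate invariant symmetric bilinear form on S(D). -/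
/-- The canonical bilinear form on the double extension `S(D) = FD ⊕ S ⊕ Fℏ`:
it restricts to `B_S` on `S`, `B(D,ℏ) = 1` and all other pairings vanish. -/
def deForm {F S : Type*} [Field F] [LieRing S] [LieAlgebra F S]
    (BS : LinearMap.BilinForm F S) : F × S × F → F × S × F → F :=
  fun x y => BS x.2.1 y.2.1 + x.1 * y.2.2 + x.2.2 * y.1

section DoubleExtension

variable {F S : Type*} [Field F] [LieRing S] [LieAlgebra F S] {BS : LinearMap.BilinForm F S}

theorem deForm_comm (hsymm : ∀ x y : S, BS x y = BS y x) (x y : F × S × F) :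
    deForm BS x y = deForm BS y x := by
  simp only [deForm, hsymm x.2.1 y.2.1]
  ring

theorem eq_zero_of_deForm_eq_zero (hsep : BS.SeparatingLeft) {x : F × S × F}
    (hx : ∀ y : F × S × F, deForm BS x y = 0) : x = 0 := by
  have hS : x.2.1 = 0 := hsep x.2.1 fun s => by simpa [deForm] using hx (0, s, 0)
  have hD : x.1 = 0 := by simpa [deForm] using hx (0, 0, 1)
  have hℏ : x.2.2 = 0 := by simpa [deForm] using hx (1, 0, 0)
  exact Prod.ext hD (Prod.ext hS hℏ)

theorem deForm_deBracket (hinv : ∀ x y z : S, BS ⁅x, y⁆ z = BS x ⁅y, z⁆) {D : S →ₗ[F] S}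
    (hDskew : ∀ x y : S, BS (D x) y = - BS x (D y)) (x y z : F × S × F) :
    deForm BS (deBracket D BS x y) z = deForm BS x (deBracket D BS y z) := by
  simp only [deForm, deBracket, map_add, map_sub, map_smul, LinearMap.add_apply,
    LinearMap.sub_apply, LinearMap.smul_apply, smul_eq_mul,
    hinv x.2.1 y.2.1 z.2.1, hDskew x.2.1 z.2.1, hDskew x.2.1 y.2.1]
  ring

end DoubleExtension

theorem double_extension_metric_general
    {F S : Type*} [Field F] [LieRing S] [LieAlgebra F S]
    (BS : LinearMap.BilinForm F S)
    (hsymm : ∀ x y : S, BS x y = BS y x)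
    (hnondeg : BS.Nondegenerate)
    (hinv : ∀ x y z : S, BS ⁅x, y⁆ z = BS x ⁅y, z⁆)
    (D : S →ₗ[F] S)
    (hDskew : ∀ x y : S, BS (D x) y = - BS x (D y)) :
    (∀ x y : F × S × F, deForm BS x y = deForm BS y x) ∧
    (∀ x : F × S × F, (∀ y : F × S × F, deForm BS x y = 0) → x = 0) ∧
    (∀ x y z : F × S × F,
        deForm BS (deBracket D BS x y) z = deForm BS x (deBracket D BS y z)) :=
  ⟨deForm_comm hsymm, fun _ => eq_zero_of_deForm_eq_zero hnondeg.1,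
    deForm_deBracket hinv hDskew⟩

/-- The canonical bilinear form on the double extension `S(D)` of a quadratic Lie
algebra `(S,B_S)` by a `B_S`-skew-symmetric derivation `D` is a nondegenerate
invariant symmetric bilinear form. -/
theorem double_extension_metric
    {F S : Type*} [Field F] [LieRing S] [LieAlgebra F S]
    (BS : LinearMap.BilinForm F S)
    (hsymm : ∀ x y : S, BS x y = BS y x)
    (hnondeg : BS.Nondegenerate)
    (hinv : ∀ x y z : S, BS ⁅x, y⁆ z = BS x ⁅y, z⁆)
    (D : S →ₗ[F] S)
    (hder : ∀ x y : S, D ⁅x, y⁆ = ⁅D x, y⁆ + ⁅x, D y⁆)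
    (hDskew : ∀ x y : S, BS (D x) y = - BS x (D y)) :
    (∀ x y : F × S × F, deForm BS x y = deForm BS y x) ∧
    (∀ x : F × S × F, (∀ y : F × S × F, deForm BS x y = 0) → x = 0) ∧
    (∀ x y z : F × S × F,
        deForm BS (deBracket D BS x y) z = deForm BS x (deBracket D BS y z)) :=
  double_extension_metric_general BS hsymm hnondeg hinv D hDskew
end

section
/- Let V be a 2m-dimensional F-vector space with nondegenerate skew-symmetric form ω, and let φ ∈ 𝔬(ω) (i.e. ω(φ(u),v) = −ω(u,φ(v))) be invertible. On 𝔥_m(φ) = Fφ ⊕ V ⊕ Fℏ with bracket [φ,u] = φ(u), [u,v] = ω(u,v)ℏ, ℏ central, define B by B(u,v) = ω(φ^{-1}(u),v) on V, B(φ,ℏ) = 1, B(u,φ) = B(u,ℏ) = 0, B(φ,φ) = B(ℏ,ℏ) = 0. Then 𝔥_m(φ) is a quadratic Lie algebra; in particular B is symmetric, nondegenerate, and invariant. -/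
/-- The bracket of the Heisenberg Lie algebra extended by `φ`:
on `Fφ ⊕ V ⊕ Fℏ`, `[(α,u,γ),(β,v,δ)] = (0, α·φ(v) − β·φ(u), ω(u,v))`. -/
def heisExtBracket {F V : Type*} [Field F] [AddCommGroup V] [Module F V]
    (φ : V →ₗ[F] V) (ω : V →ₗ[F] V →ₗ[F] F) :
    F × V × F → F × V × F → F × V × F :=
  fun x y => (0, x.1 • φ y.2.1 - y.1 • φ x.2.1, ω x.2.1 y.2.1)

/-- The invariant metric of the Heisenberg Lie algebra extended by an invertible
`φ ∈ 𝔬(ω)` (given as a linear equivalence `e`): `B(u,v) = ω(φ⁻¹(u),v)` on `V`,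
`B(φ,ℏ) = 1`, all other pairings zero. -/
def heisExtForm {F V : Type*} [Field F] [AddCommGroup V] [Module F V]
    (e : V ≃ₗ[F] V) (ω : V →ₗ[F] V →ₗ[F] F) :
    F × V × F → F × V × F → F :=
  fun x y => ω (e.symm x.2.1) y.2.1 + x.1 * y.2.2 + x.2.2 * y.1

/-- For an invertible `φ ∈ 𝔬(ω)`, the extension `𝔥_m(φ) = Fφ ⊕ V ⊕ Fℏ` is a
quadratic Lie algebra: the bracket is antisymmetric and Jacobi, and the form is
symmetric, nondegenerate and invariant. -/
theorem heisenberg_extension_quadratic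
    {F V : Type*} [Field F] [AddCommGroup V] [Module F V]
    (ω : V →ₗ[F] V →ₗ[F] F)
    (hskew : ∀ u v : V, ω u v = - ω v u)
    (hω_nondeg : ∀ u : V, (∀ v : V, ω u v = 0) → u = 0)
    (e : V ≃ₗ[F] V)
    (heskew : ∀ u v : V, ω (e u) v = - ω u (e v)) :
    (∀ x y : F × V × F,
        heisExtBracket (e : V →ₗ[F] V) ω x y = - heisExtBracket (e : V →ₗ[F] V) ω y x) ∧
    (∀ x y z : F × V × F,
        heisExtBracket (e : V →ₗ[F] V) ω (heisExtBracket (e : V →ₗ[F] V) ω x y) z +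
        heisExtBracket (e : V →ₗ[F] V) ω (heisExtBracket (e : V →ₗ[F] V) ω y z) x +
        heisExtBracket (e : V →ₗ[F] V) ω (heisExtBracket (e : V →ₗ[F] V) ω z x) y = 0) ∧
    (∀ x y : F × V × F, heisExtForm e ω x y = heisExtForm e ω y x) ∧
    (∀ x : F × V × F, (∀ y : F × V × F, heisExtForm e ω x y = 0) → x = 0) ∧
    (∀ x y z : F × V × F,
        heisExtForm e ω (heisExtBracket (e : V →ₗ[F] V) ω x y) z =
          heisExtForm e ω x (heisExtBracket (e : V →ₗ[F] V) ω y z)) := by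
  have hsymm' : ∀ u v : V, ω (e.symm u) (e v) = - ω u v := by
    intro u v
    have h := heskew (e.symm u) v
    rw [e.apply_symm_apply] at h
    linear_combination h
  have hpair : ∀ a b : V, ω (e a) b = ω (e b) a := by
    intro a b
    linear_combination heskew a b - hskew a (e b)
  have hBsymm : ∀ u v : V, ω (e.symm u) v = ω (e.symm v) u := by
    intro u v
    have h1 := hsymm' u (e.symm v)
    rw [e.apply_symm_apply] at h1
    rw [h1, hskew u (e.symm v)]; ring
  refine ⟨?_, ?_, ?_, ?_, ?_⟩
  · intro x y
    simp only [heisExtBracket, Prod.neg_mk, Prod.mk.injEq]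
    exact ⟨by ring, by abel, hskew _ _⟩
  · intro x y z
    simp only [heisExtBracket, Prod.mk_add_mk, Prod.mk_eq_zero, LinearEquiv.coe_coe,
      map_sub, map_smul, LinearMap.map_sub₂, LinearMap.map_smul₂, LinearMap.sub_apply,
      LinearMap.smul_apply, smul_eq_mul, zero_smul, zero_sub, map_zero,
      LinearMap.zero_apply]
    refine ⟨by ring, by module, ?_⟩
    linear_combination x.1 * hpair y.2.1 z.2.1 + y.1 * hpair z.2.1 x.2.1 +
      z.1 * hpair x.2.1 y.2.1
  · intro x y
    simp only [heisExtForm]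
    rw [hBsymm]
    ring
  · intro x hx
    have h1 := hx (1, 0, 0)
    have h2 := hx (0, 0, 1)
    simp only [heisExtForm, map_zero, LinearMap.zero_apply, mul_zero, mul_one,
      zero_add, add_zero] at h1 h2
    have h3 : x.2.1 = 0 := by
      have := hω_nondeg (e.symm x.2.1) (fun v => by
        have := hx (0, v, 0)
        simpa [heisExtForm] using this)
      have := congrArg e this
      simpa using this
    refine Prod.ext ?_ (Prod.ext ?_ ?_) <;> simp [h1, h2, h3]
  · intro x y z
    simp only [heisExtForm, heisExtBracket, LinearEquiv.coe_coe, map_sub, map_smul,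
      e.symm_apply_apply, LinearMap.map_sub₂, LinearMap.map_smul₂, LinearMap.sub_apply,
      LinearMap.smul_apply, smul_eq_mul]
    linear_combination -y.1 * hsymm' x.2.1 z.2.1 + z.1 * hsymm' x.2.1 y.2.1
end

section
/- Let 𝔞 be a Lie algebra with invariant metric B_𝔞, and suppose T, F: 𝔞 → 𝔞 are linear maps with e ∈ 𝔞 such that: F is a derivation of 𝔞, T([a,b]) = [T(a),b] = [a,T(b)] for all a,b, T∘F = F∘T = ad(e), and Ker(F) = C_𝔞(e) (the centralizer of e). Then F is an inner derivation of 𝔞. -/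
/-!
`T (F x) = ⁅e, x⁆` vanishes exactly when `F x` does, so `T` is injective on the range of `F`;
as `F` commutes with `T`, the range of `F` even meets the generalized kernel of `T` trivially.
Splitting off the factor `X ^ k` of the minimal polynomial of `T` gives `T ^ k = T ^ (k + 1) g(T)`
for a polynomial `g`, hence `g(T) T` is the identity on the range of `F`. Polynomials in `T` stay
in the centroid, so `F x = g(T) (T (F x)) = g(T) ⁅e, x⁆ = ⁅g(T) e, x⁆`.
-/

open Polynomial

theorem Polynomial.exists_dvd_X_pow_mul_one_sub_X_mul {K : Type*} [Field K] {m : K[X]}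
    (hm : m ≠ 0) : ∃ (k : ℕ) (p : K[X]), m ∣ X ^ k * (1 - X * p) := by
  obtain ⟨q, hmq, hq⟩ := m.exists_eq_pow_rootMultiplicity_mul_and_not_dvd hm 0
  rw [C_0, sub_zero] at hmq hq
  set c := q.coeff 0
  have hc : c ≠ 0 := mt X_dvd_iff.mpr hq
  have hCC : C c * C c⁻¹ = 1 := by rw [← C_mul, mul_inv_cancel₀ hc, C_1]
  -- `q = X * q.divX + C c` gives `X ^ k * (1 + C c⁻¹ * X * q.divX) = C c⁻¹ * m`
  refine ⟨m.rootMultiplicity 0, -C c⁻¹ * q.divX, C c⁻¹, ?_⟩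
  linear_combination (-C c⁻¹) * hmq + X ^ m.rootMultiplicity 0 * C c⁻¹ * q.X_mul_divX_add
    - X ^ m.rootMultiplicity 0 * hCC

theorem IsIntegral.exists_pow_eq_pow_succ_mul_aeval {K A : Type*} [Field K] [Ring A]
    [Algebra K A] {x : A} (hx : IsIntegral K x) :
    ∃ (k : ℕ) (p : K[X]), x ^ k = x ^ (k + 1) * aeval x p := by
  obtain ⟨k, p, hdvd⟩ := exists_dvd_X_pow_mul_one_sub_X_mul (minpoly.ne_zero hx)
  have h := aeval_eq_zero_of_dvd_aeval_eq_zero hdvd (minpoly.aeval K x)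
  rw [map_mul, map_sub, map_one, map_mul, map_pow, aeval_X, mul_sub, mul_one, sub_eq_zero] at h
  exact ⟨k, p, by rwa [pow_succ, mul_assoc]⟩

theorem Commute.aeval_right {R A : Type*} [CommSemiring R] [Semiring A] [Algebra R A]
    {a b : A} (h : Commute a b) (p : R[X]) : Commute a (aeval b p) :=
  Algebra.commute_of_mem_adjoin_singleton_of_commute (aeval_mem_adjoin_singleton R b) h

namespace Module.End

theorem apply_eq_zero_of_pow_apply_eq_zero {R M : Type*} [CommSemiring R] [AddCommMonoid M]
    [Module R M] {T F : Module.End R M} (hTF : Commute T F)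
    (hinj : ∀ x, T (F x) = 0 → F x = 0) (n : ℕ) (x : M) (h : (T ^ n) (F x) = 0) :
    F x = 0 := by
  induction n generalizing x with
  | zero => simpa using h
  | succ n ih =>
    have hTFx : T (F x) = F (T x) := LinearMap.congr_fun hTF x
    refine hinj x (hTFx ▸ ih (T x) ?_)
    rwa [← hTFx, ← mul_apply, ← pow_succ]

theorem exists_aeval_left_inverse_on_range {K V : Type*} [Field K] [AddCommGroup V] [Module K V]
    [FiniteDimensional K V] {T F : Module.End K V} (hTF : Commute T F)
    (hinj : ∀ x, T (F x) = 0 → F x = 0) : ∃ p : K[X], ∀ x, F x = aeval T p (T (F x)) := by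
  obtain ⟨k, p, hk⟩ := (LinearMap.isIntegral T).exists_pow_eq_pow_succ_mul_aeval
  set g := aeval T p
  have hgT : ∀ y, T (g y) = g (T y) := LinearMap.congr_fun ((Commute.refl T).aeval_right p).eq
  have hFg : ∀ y, F (g y) = g (F y) := LinearMap.congr_fun (hTF.symm.aeval_right p).eq
  have hTFx : ∀ y, T (F y) = F (T y) := LinearMap.congr_fun hTF.eq
  refine ⟨p, fun x => ?_⟩
  have hF : F (x - g (T x)) = F x - g (T (F x)) := by
    rw [map_sub, hFg, hTFx]
  have hzero : (T ^ k) (F (x - g (T x))) = 0 := by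
    rw [hF, map_sub, sub_eq_zero, ← hgT, ← mul_apply (T ^ k) T, ← pow_succ,
      ← mul_apply (T ^ (k + 1)) g, ← hk]
  rw [← sub_eq_zero, ← hF]
  exact apply_eq_zero_of_pow_apply_eq_zero hTF hinj k _ hzero

end Module.End

theorem LieAlgebra.aeval_lie_of_forall_apply_lie {K L : Type*} [CommRing K] [LieRing L]
    [LieAlgebra K L] {T : Module.End K L} (hT : ∀ x y : L, T ⁅x, y⁆ = ⁅x, T y⁆) (p : K[X])
    (x y : L) : aeval T p ⁅x, y⁆ = ⁅x, aeval T p y⁆ := by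
  have hcomm : Commute T (ad K L x) := LinearMap.ext fun y => hT x y
  simpa using (LinearMap.congr_fun (hcomm.symm.aeval_right p).eq y).symm

theorem F_is_inner_derivation_general
    {K a : Type*} [Field K] [LieRing a] [LieAlgebra K a]
    [FiniteDimensional K a]
    (T Fm : a →ₗ[K] a) (e : a)
    (hTcent : ∀ x y : a, T ⁅x, y⁆ = ⁅T x, y⁆ ∧ T ⁅x, y⁆ = ⁅x, T y⁆)
    (hTF : ∀ x : a, T (Fm x) = ⁅e, x⁆)
    (hFT : ∀ x : a, Fm (T x) = ⁅e, x⁆)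
    (hkerF : ∀ x : a, Fm x = 0 ↔ ⁅x, e⁆ = 0) :
    ∃ c : a, ∀ x : a, Fm x = ⁅c, x⁆ := by
  have hcomm : Commute T Fm := LinearMap.ext fun x => (hTF x).trans (hFT x).symm
  have hinj : ∀ x, T (Fm x) = 0 → Fm x = 0 := fun x hx => by
    rwa [hkerF, ← lie_skew, neg_eq_zero, ← hTF]
  obtain ⟨p, hp⟩ := Module.End.exists_aeval_left_inverse_on_range hcomm hinj
  refine ⟨aeval T p e, fun x => ?_⟩
  calc Fm x = aeval T p ⁅e, x⁆ := by rw [hp x, hTF]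
    _ = ⁅aeval T p e, x⁆ := by
      rw [← lie_skew e x, map_neg,
        LieAlgebra.aeval_lie_of_forall_apply_lie (fun x y => (hTcent x y).2), lie_skew]

/-- Lemma 1.9: let `𝔞` be a finite-dimensional Lie algebra with an invariant metric
`B_𝔞`, and let `T, F : 𝔞 → 𝔞` be linear maps and `e ∈ 𝔞` such that `F` is a
derivation, `T` is in the centroid (`T[a,b] = [T a, b] = [a, T b]`),
`T∘F = F∘T = ad(e)` and `Ker F = C_𝔞(e)`. Then `F` is an inner derivation. -/
theorem F_is_inner_derivation
    {K a : Type*} [Field K] [CharZero K] [LieRing a] [LieAlgebra K a]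
    [FiniteDimensional K a]
    (B : LinearMap.BilinForm K a)
    (hsymm : ∀ x y : a, B x y = B y x)
    (hnondeg : B.Nondegenerate)
    (hinv : ∀ x y z : a, B ⁅x, y⁆ z = B x ⁅y, z⁆)
    (T Fm : a →ₗ[K] a) (e : a)
    (hFder : ∀ x y : a, Fm ⁅x, y⁆ = ⁅Fm x, y⁆ + ⁅x, Fm y⁆)
    (hTcent : ∀ x y : a, T ⁅x, y⁆ = ⁅T x, y⁆ ∧ T ⁅x, y⁆ = ⁅x, T y⁆)
    (hTF : ∀ x : a, T (Fm x) = ⁅e, x⁆)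
    (hFT : ∀ x : a, Fm (T x) = ⁅e, x⁆)
    (hkerF : ∀ x : a, Fm x = 0 ↔ ⁅x, e⁆ = 0) :
    ∃ c : a, ∀ x : a, Fm x = ⁅c, x⁆ :=
  F_is_inner_derivation_general T Fm e hTcent hTF hFT hkerF
end
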